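/- arXiv:0910.1258 — 2 statements merged into one kernel-verified Lean document; each statement's English description precedes it below -/
import Mathlib

section
/- For any natural numbers a, b, c, d, the integral ∫_{O_2} u_{11}^a u_{12}^b u_{21}^c u_{22}^d du over the orthogonal group O_2 equals ε · (a+d)!! (b+c)!! / (a+b+c+d+1)!!, where ε = 1 if a, b, c, d are all even, ε = −1 if a, b, c, d are all odd, and ε = 0 otherwise. -/
/-!
Every element of `O₂` is a rotation `R θ` or a reflection `S θ`. Averaging over left translates
by rotations (left invariance plus Fubini) gives `2π ∫ f dμ = ∫ g dμ`, where
`g u = ∫₀^{2π} f (R θ u) dθ`. By periodicity `g` is constant, `A = ∫₀^{2π} f ∘ R`, on rotations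
and constant, `B = ∫₀^{2π} f ∘ S`, on reflections, so `g u + g (S 0 u) = A + B`; invariance
under `S 0` then gives `∫ f dμ = (A + B) / 4π`. For the monomial `u₁₁^a u₁₂^b u₂₁^c u₂₂^d` both
`A` and `B` are `±∫₀^{2π} cos^{a+d} sin^{b+c}`, which integration by parts reduces to double
factorials.
-/

open MeasureTheory Matrix

noncomputable section

/-- The double factorial convention of the paper: `m!! = (m-1)(m-3)(m-5)⋯`,
the product ending at `1` or `2` (empty product being `1`), i.e. the standard
double factorial of `m - 1`. -/
def df (m : ℕ) : ℕ := Nat.doubleFactorial (m - 1)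

/-- The Borel σ-algebra on the orthogonal group `O_n`. -/
instance (n : ℕ) : MeasurableSpace (Matrix.orthogonalGroup (Fin n) ℝ) := borel _

instance (n : ℕ) : BorelSpace (Matrix.orthogonalGroup (Fin n) ℝ) := ⟨rfl⟩

/-- The `(i,j)` entry of an orthogonal matrix (out-of-range indices give `0`;
in all statements below the indices are in range). -/
def entry {n : ℕ} (u : Matrix.orthogonalGroup (Fin n) ℝ) (i j : ℕ) : ℝ :=
  if h : i < n ∧ j < n then (u : Matrix (Fin n) (Fin n) ℝ) ⟨i, h.1⟩ ⟨j, h.2⟩ else 0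

/-- The rectangular integral `I_n(a) = ∫_{O_n} ∏_{i,j} u_{ij}^{a_{ij}} du`. -/
def In (n : ℕ) {p q : ℕ} (μ : Measure (Matrix.orthogonalGroup (Fin n) ℝ))
    (a : Matrix (Fin p) (Fin q) ℕ) : ℝ :=
  ∫ u, ∏ i : Fin p, ∏ j : Fin q, entry u i j ^ a i j ∂μ

/-- The two-row integral `I_n(a;b) = ∫_{O_n} ∏_j u_{1j}^{a_j} u_{2j}^{b_j} du`. -/
def twoRowI (n : ℕ) {q : ℕ} (μ : Measure (Matrix.orthogonalGroup (Fin n) ℝ))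
    (a b : Fin q → ℕ) : ℝ :=
  ∫ u, ∏ j : Fin q, entry u 0 j ^ a j * entry u 1 j ^ b j ∂μ

/-- The normalized two-row quantity
`Φ_n(a;b) = (Σa+n-2)!!(Σb+n-2)!! / (((n-2)!!)² ∏ a_i!! ∏ b_i!!) · I_n(a;b)`. -/
def Phi (n : ℕ) {q : ℕ} (μ : Measure (Matrix.orthogonalGroup (Fin n) ℝ))
    (a b : Fin q → ℕ) : ℝ :=
  ((df (∑ i, a i + n - 2) : ℝ) * (df (∑ i, b i + n - 2) : ℝ)) /
    ((df (n - 2) : ℝ) ^ 2 * (∏ i, (df (a i) : ℝ)) * ∏ i, (df (b i) : ℝ)) *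
    twoRowI n μ a b

/-- The pair of rows `E(r,s,t)`: top row `(1^{2r}, 2^s, 0^t)`. -/
def Etop (r s t : ℕ) : Fin (2 * r + s + t) → ℕ :=
  fun j => if (j : ℕ) < 2 * r then 1 else if (j : ℕ) < 2 * r + s then 2 else 0

/-- The pair of rows `E(r,s,t)`: bottom row `(1^{2r}, 0^s, 2^t)`. -/
def Ebot (r s t : ℕ) : Fin (2 * r + s + t) → ℕ :=
  fun j => if (j : ℕ) < 2 * r then 1 else if (j : ℕ) < 2 * r + s then 0 else 2

open Real

lemma Function.Periodic.intervalIntegral_comp_add_right {E : Type*} [NormedAddCommGroup E]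
    [NormedSpace ℝ E] {g : ℝ → E} {T : ℝ} (hg : Function.Periodic g T) (α : ℝ) :
    ∫ θ in 0..T, g (θ + α) = ∫ θ in 0..T, g θ := by
  rw [intervalIntegral.integral_comp_add_right, zero_add, add_comm T α,
    hg.intervalIntegral_add_eq α 0, zero_add]

lemma Real.exists_cos_eq_and_sin_eq {x y : ℝ} (h : x ^ 2 + y ^ 2 = 1) :
    ∃ θ, cos θ = x ∧ sin θ = y := by
  set z : ℂ := ⟨x, y⟩
  have hz : ‖z‖ = 1 := by
    refine (pow_eq_one_iff_of_nonneg (norm_nonneg z) two_ne_zero).mp ?_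
    rw [Complex.sq_norm, Complex.normSq_mk]
    linear_combination h
  exact ⟨z.arg, by simpa [hz] using Complex.norm_mul_cos_arg z,
    by simpa [hz] using Complex.norm_mul_sin_arg z⟩

lemma neg_one_pow_add_neg_one_pow_div_two_mul_ite (a b c d : ℕ) :
    ((-1 : ℝ) ^ b + (-1) ^ d) / 2 * (if Even (a + d) ∧ Even (b + c) then 1 else 0) =
      if Even a ∧ Even b ∧ Even c ∧ Even d then 1
        else if Odd a ∧ Odd b ∧ Odd c ∧ Odd d then -1 else 0 := by
  by_cases ha : Even a <;> by_cases hb : Even b <;> by_cases hc : Even c <;>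
    by_cases hd : Even d <;> simp [ha, hb, hc, hd, Nat.even_add, ← Nat.not_even_iff_odd]

lemma df_add_two (m : ℕ) : df (m + 2) = (m + 1) * df m := by
  rcases m with _ | m
  · rfl
  · simp [df]

def cosSinMoment (m n : ℕ) : ℝ := ∫ x in 0..2 * π, cos x ^ m * sin x ^ n

lemma cosSinMoment_add_two_right_eq_sub (m n : ℕ) :
    cosSinMoment m (n + 2) = cosSinMoment m n - cosSinMoment (m + 2) n := by
  have h (x : ℝ) :
      cos x ^ m * sin x ^ (n + 2) = cos x ^ m * sin x ^ n - cos x ^ (m + 2) * sin x ^ n := by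
    linear_combination cos x ^ m * sin x ^ n * sin_sq_add_cos_sq x
  simp only [cosSinMoment, h]
  exact intervalIntegral.integral_sub (Continuous.intervalIntegrable (by fun_prop) _ _)
    (Continuous.intervalIntegrable (by fun_prop) _ _)

-- Integration by parts: `cos ^ (m + 1) * sin ^ (n + 1)` vanishes at both ends of the period.
lemma cosSinMoment_add_two_left (m n : ℕ) :
    ((m : ℝ) + n + 2) * cosSinMoment (m + 2) n = (m + 1) * cosSinMoment m n := by
  have hderiv (x : ℝ) : HasDerivAt (fun x => cos x ^ (m + 1) * sin x ^ (n + 1))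
      (((m : ℝ) + n + 2) * (cos x ^ (m + 2) * sin x ^ n) - (m + 1) * (cos x ^ m * sin x ^ n))
      x := by
    refine (((hasDerivAt_cos x).fun_pow (m + 1)).mul
      ((hasDerivAt_sin x).fun_pow (n + 1))).congr_deriv ?_
    push_cast
    linear_combination -((m : ℝ) + 1) * cos x ^ m * sin x ^ n * sin_sq_add_cos_sq x
  have hFTC := intervalIntegral.integral_eq_sub_of_hasDerivAt (fun x _ => hderiv x)
    (Continuous.intervalIntegrable (by fun_prop) 0 (2 * π))
  rw [intervalIntegral.integral_sub, intervalIntegral.integral_const_mul,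
    intervalIntegral.integral_const_mul] at hFTC
  · simp only [sin_two_pi, sin_zero, zero_pow n.succ_ne_zero, mul_zero, sub_zero] at hFTC
    simp only [cosSinMoment]
    linarith
  all_goals exact Continuous.intervalIntegrable (by fun_prop) _ _

lemma cosSinMoment_add_two_right (m n : ℕ) :
    ((m : ℝ) + n + 2) * cosSinMoment m (n + 2) = (n + 1) * cosSinMoment m n := by
  rw [cosSinMoment_add_two_right_eq_sub, mul_sub, cosSinMoment_add_two_left]
  ring

lemma cosSinMoment_one_left (n : ℕ) : cosSinMoment 1 n = 0 := by
  simp only [cosSinMoment, mul_comm (cos _ ^ 1)]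
  simpa using integral_sin_pow_mul_cos_pow_odd (a := 0) (b := 2 * π) n 0

theorem cosSinMoment_eq : ∀ m n : ℕ, cosSinMoment m n =
    if Even m ∧ Even n then 2 * π * df m * df n / df (m + n + 1) else 0
  | 0, 0 => by simp [cosSinMoment, df]
  | 0, 1 => by simp [cosSinMoment]
  | 1, n => by simp [cosSinMoment_one_left]
  | 0, n + 2 => by
    have h := cosSinMoment_add_two_right 0 n
    have hdf : (df (0 + (n + 2) + 1) : ℝ) = (n + 2) * df (0 + n + 1) := by
      rw [show 0 + (n + 2) + 1 = 0 + n + 1 + 2 by ring, df_add_two]; push_cast; ring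
    rw [cosSinMoment_eq 0 n] at h
    rw [hdf, df_add_two]
    simp only [Nat.even_add, even_two, iff_true] at h ⊢
    split_ifs at h ⊢ <;> push_cast at h ⊢
    · field_simp at h ⊢; linarith
    · rw [mul_zero] at h
      exact (mul_eq_zero.mp h).resolve_left (by positivity)
  | m + 2, n => by
    have h := cosSinMoment_add_two_left m n
    have hdf : (df (m + 2 + n + 1) : ℝ) = (m + n + 2) * df (m + n + 1) := by
      rw [show m + 2 + n + 1 = m + n + 1 + 2 by ring, df_add_two]; push_cast; ring
    rw [cosSinMoment_eq m n] at h
    rw [hdf, df_add_two]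
    simp only [Nat.even_add, even_two, iff_true] at h ⊢
    split_ifs at h ⊢ <;> push_cast at h ⊢
    · field_simp at h ⊢; linarith
    · rw [mul_zero] at h
      exact (mul_eq_zero.mp h).resolve_left (by positivity)

local notation "O₂" => Matrix.orthogonalGroup (Fin 2) ℝ

instance (n : ℕ) : CompactSpace (Matrix.orthogonalGroup (Fin n) ℝ) := by
  let K : Set (Matrix (Fin n) (Fin n) ℝ) :=
    Set.univ.pi fun _ => Set.univ.pi fun _ => Set.Icc (-1) 1
  have hK : IsCompact K := isCompact_univ_pi fun _ => isCompact_univ_pi fun _ => isCompact_Icc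
  have hsub : (unitary (Matrix (Fin n) (Fin n) ℝ) : Set (Matrix (Fin n) (Fin n) ℝ)) ⊆ K :=
    fun U hU i _ j _ => by simpa [abs_le] using entry_norm_bound_of_unitary hU i j
  exact isCompact_iff_compactSpace.mp (hK.of_isClosed_subset isClosed_unitary hsub)

@[fun_prop] lemma continuous_entry {n : ℕ} (i j : ℕ) :
    Continuous fun u : Matrix.orthogonalGroup (Fin n) ℝ => entry u i j := by
  unfold entry
  split_ifs
  exacts [(continuous_apply_apply _ _).comp continuous_subtype_val, continuous_const]

namespace O2

def rotation (θ : ℝ) : O₂ :=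
  ⟨!![cos θ, -sin θ; sin θ, cos θ], by
    rw [mem_orthogonalGroup_iff]
    ext i j
    fin_cases i <;> fin_cases j <;> simp [Matrix.mul_apply, ← sq, mul_comm]⟩

def reflection (θ : ℝ) : O₂ :=
  ⟨!![cos θ, sin θ; sin θ, -cos θ], by
    rw [mem_orthogonalGroup_iff]
    ext i j
    fin_cases i <;> fin_cases j <;> simp [Matrix.mul_apply, ← sq, mul_comm]⟩

@[simp] lemma coe_rotation (θ : ℝ) :
    (rotation θ : Matrix (Fin 2) (Fin 2) ℝ) = !![cos θ, -sin θ; sin θ, cos θ] := rfl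

@[simp] lemma coe_reflection (θ : ℝ) :
    (reflection θ : Matrix (Fin 2) (Fin 2) ℝ) = !![cos θ, sin θ; sin θ, -cos θ] := rfl

lemma rotation_mul_rotation (θ α : ℝ) : rotation θ * rotation α = rotation (θ + α) := by
  ext i j
  fin_cases i <;> fin_cases j <;>
    simp [Matrix.mul_apply, Fin.sum_univ_two, cos_add, sin_add] <;> ring

lemma rotation_mul_reflection (θ α : ℝ) : rotation θ * reflection α = reflection (θ + α) := by
  ext i j
  fin_cases i <;> fin_cases j <;>
    simp [Matrix.mul_apply, Fin.sum_univ_two, cos_add, sin_add] <;> ring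

lemma reflection_zero_mul_rotation (α : ℝ) : reflection 0 * rotation α = reflection (-α) := by
  ext i j
  fin_cases i <;> fin_cases j <;> simp [Matrix.mul_apply, Fin.sum_univ_two]

lemma reflection_zero_mul_reflection (α : ℝ) : reflection 0 * reflection α = rotation (-α) := by
  ext i j
  fin_cases i <;> fin_cases j <;> simp [Matrix.mul_apply, Fin.sum_univ_two]

lemma continuous_rotation : Continuous rotation := by
  refine Continuous.subtype_mk (continuous_matrix fun i j => ?_) _
  fin_cases i <;> fin_cases j <;> simp <;> fun_prop

lemma periodic_rotation : Function.Periodic rotation (2 * π) := fun θ => by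
  ext i j; fin_cases i <;> fin_cases j <;> simp

lemma periodic_reflection : Function.Periodic reflection (2 * π) := fun θ => by
  ext i j; fin_cases i <;> fin_cases j <;> simp

lemma exists_angle_of_orthonormal_columns {x y b d : ℝ} (h00 : x ^ 2 + y ^ 2 = 1)
    (h11 : b ^ 2 + d ^ 2 = 1) (h01 : x * b + y * d = 0) : ∃ α,
    !![x, b; y, d] = !![cos α, -sin α; sin α, cos α] ∨
      !![x, b; y, d] = !![cos α, sin α; sin α, -cos α] := by
  obtain ⟨α, rfl, rfl⟩ := exists_cos_eq_and_sin_eq h00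
  -- `s` is the determinant; the second column is `s` times the first one turned by `π / 2`.
  set s := cos α * d - sin α * b
  have hb : b = -sin α * s := by linear_combination cos α * h01 - b * h00
  have hd : d = cos α * s := by linear_combination sin α * h01 - d * h00
  have hs : s ^ 2 = 1 := by
    linear_combination (b ^ 2 + d ^ 2) * h00 + h11 - (cos α * b + sin α * d) * h01
  refine ⟨α, (sq_eq_one_iff.mp hs).imp (fun hs1 => ?_) (fun hs1 => ?_)⟩ <;>
    rw [hb, hd, hs1] <;> simp

lemma eq_rotation_or_eq_reflection (u : O₂) :
    (∃ α, u = rotation α) ∨ ∃ α, u = reflection α := by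
  have hu := congrFun₂ ((mem_orthogonalGroup_iff' _ _).mp u.2)
  obtain ⟨α, h | h⟩ := exists_angle_of_orthonormal_columns
    (by simpa [Matrix.mul_apply, sq] using hu 0 0) (by simpa [Matrix.mul_apply, sq] using hu 1 1)
    (by simpa [Matrix.mul_apply] using hu 0 1)
  · exact .inl ⟨α, Subtype.ext ((Matrix.eta_fin_two _).trans h)⟩
  · exact .inr ⟨α, Subtype.ext ((Matrix.eta_fin_two _).trans h)⟩

def rotationAverage (f : O₂ → ℝ) (u : O₂) : ℝ := ∫ θ in 0..2 * π, f (rotation θ * u)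

lemma rotationAverage_rotation (f : O₂ → ℝ) (α : ℝ) :
    rotationAverage f (rotation α) = ∫ θ in 0..2 * π, f (rotation θ) := by
  simpa only [rotationAverage, rotation_mul_rotation, Function.comp_apply] using
    (periodic_rotation.comp f).intervalIntegral_comp_add_right α

lemma rotationAverage_reflection (f : O₂ → ℝ) (α : ℝ) :
    rotationAverage f (reflection α) = ∫ θ in 0..2 * π, f (reflection θ) := by
  simpa only [rotationAverage, rotation_mul_reflection, Function.comp_apply] using
    (periodic_reflection.comp f).intervalIntegral_comp_add_right α

lemma rotationAverage_add_rotationAverage_reflection_zero_mul (f : O₂ → ℝ) (u : O₂) :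
    rotationAverage f u + rotationAverage f (reflection 0 * u) =
      (∫ θ in 0..2 * π, f (rotation θ)) + ∫ θ in 0..2 * π, f (reflection θ) := by
  rcases eq_rotation_or_eq_reflection u with ⟨α, rfl⟩ | ⟨α, rfl⟩
  · rw [reflection_zero_mul_rotation, rotationAverage_rotation, rotationAverage_reflection]
  · rw [reflection_zero_mul_reflection, rotationAverage_rotation, rotationAverage_reflection,
      add_comm]

section Fubini

variable (μ : Measure O₂) [IsFiniteMeasure μ] {f : O₂ → ℝ}

lemma integrable_uncurry_comp_rotation_mul (hf : Continuous f) :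
    Integrable (Function.uncurry fun θ u => f (rotation θ * u))
      ((volume.restrict (Set.Ioc 0 (2 * π))).prod μ) := by
  obtain ⟨C, hC⟩ := isCompact_univ.exists_bound_of_continuousOn hf.continuousOn
  exact .of_bound (hf.comp ((continuous_rotation.comp continuous_fst).mul
    continuous_snd)).aestronglyMeasurable C (.of_forall fun _ => hC _ (Set.mem_univ _))

lemma integrable_rotationAverage (hf : Continuous f) : Integrable (rotationAverage f) μ := by
  unfold rotationAverage
  simpa only [intervalIntegral.integral_of_le two_pi_pos.le, Function.uncurry_apply_pair] using
    (integrable_uncurry_comp_rotation_mul μ hf).integral_prod_right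

lemma integral_rotationAverage [μ.IsMulLeftInvariant] (hf : Continuous f) :
    ∫ u, rotationAverage f u ∂μ = 2 * π * ∫ u, f u ∂μ := calc
  ∫ u, rotationAverage f u ∂μ = ∫ θ in 0..2 * π, ∫ u, f (rotation θ * u) ∂μ := by
    simp only [rotationAverage, intervalIntegral.integral_of_le two_pi_pos.le]
    exact (integral_integral_swap (integrable_uncurry_comp_rotation_mul μ hf)).symm
  _ = 2 * π * ∫ u, f u ∂μ := by simp [integral_mul_left_eq_self]

end Fubini

theorem integral_eq_of_isMulLeftInvariant (μ : Measure O₂) [μ.IsMulLeftInvariant]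
    [IsProbabilityMeasure μ] {f : O₂ → ℝ} (hf : Continuous f) :
    ∫ u, f u ∂μ =
      ((∫ θ in 0..2 * π, f (rotation θ)) + ∫ θ in 0..2 * π, f (reflection θ)) / (4 * π) := by
  have hswap : ∫ u, rotationAverage f u ∂μ =
      (∫ θ in 0..2 * π, f (rotation θ)) + (∫ θ in 0..2 * π, f (reflection θ)) -
        ∫ u, rotationAverage f u ∂μ := calc
    _ = ∫ u, rotationAverage f (reflection 0 * u) ∂μ := (integral_mul_left_eq_self _ _).symm
    _ = ∫ u, ((∫ θ in 0..2 * π, f (rotation θ)) + (∫ θ in 0..2 * π, f (reflection θ)) -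
          rotationAverage f u) ∂μ := integral_congr_ae <| .of_forall fun u =>
        eq_sub_of_add_eq' (rotationAverage_add_rotationAverage_reflection_zero_mul f u)
    _ = _ := by
      rw [integral_sub (integrable_const _) (integrable_rotationAverage μ hf), integral_const]
      simp
  rw [integral_rotationAverage μ hf] at hswap
  field_simp
  linarith

end O2

/-- the `n = 2` formula. -/
theorem statement1 (a b c d : ℕ)
    (μ : Measure (Matrix.orthogonalGroup (Fin 2) ℝ))
    [μ.IsHaarMeasure] [IsProbabilityMeasure μ] :
    ∫ u, entry u 0 0 ^ a * entry u 0 1 ^ b * entry u 1 0 ^ c * entry u 1 1 ^ d ∂μ =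
      (if Even a ∧ Even b ∧ Even c ∧ Even d then (1 : ℝ)
        else if Odd a ∧ Odd b ∧ Odd c ∧ Odd d then (-1 : ℝ) else 0) *
        ((df (a + d) : ℝ) * (df (b + c) : ℝ)) / (df (a + b + c + d + 1) : ℝ) := by
  have hrot (θ : ℝ) : entry (O2.rotation θ) 0 0 ^ a * entry (O2.rotation θ) 0 1 ^ b *
      entry (O2.rotation θ) 1 0 ^ c * entry (O2.rotation θ) 1 1 ^ d =
        (-1) ^ b * (cos θ ^ (a + d) * sin θ ^ (b + c)) := by
    simp [entry, neg_pow (sin θ), pow_add, mul_comm, mul_assoc, mul_left_comm]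
  have href (θ : ℝ) : entry (O2.reflection θ) 0 0 ^ a * entry (O2.reflection θ) 0 1 ^ b *
      entry (O2.reflection θ) 1 0 ^ c * entry (O2.reflection θ) 1 1 ^ d =
        (-1) ^ d * (cos θ ^ (a + d) * sin θ ^ (b + c)) := by
    simp [entry, neg_pow (cos θ), pow_add, mul_comm, mul_assoc, mul_left_comm]
  rw [O2.integral_eq_of_isMulLeftInvariant μ (by fun_prop)]
  simp only [hrot, href, intervalIntegral.integral_const_mul]
  rw [← cosSinMoment, cosSinMoment_eq, show a + d + (b + c) + 1 = a + b + c + d + 1 by ring,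
    ← neg_one_pow_add_neg_one_pow_div_two_mul_ite a b c d]
  split_ifs <;> field_simp <;> ring
end
end

section
/- Let n ≥ 1, let p, q ≤ n, and let a ∈ M_{p×q}(ℕ) be a matrix of exponents. If I_n(a) ≠ 0, then the matrix a is admissible, i.e. the sum of the entries on each of its rows and on each of its columns is an even number. -/
open MeasureTheory Matrix

noncomputable section

/-!
Left multiplication by the reflection `diag(1, …, -1, …, 1)` in coordinate `i` flips the sign
of row `i` of `u`, hence multiplies the integrand by `(-1) ^ (∑ⱼ a i j)`; right multiplication
flips column `j` in the same way. A Haar probability measure on the compact group `O_n` is invariant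
under both, so an odd row or column sum forces `I_n(a) = -I_n(a)`, i.e. `I_n(a) = 0`.
-/

instance Matrix.unitaryGroup.instCompactSpace {ι 𝕜 : Type*} [Fintype ι] [DecidableEq ι]
    [RCLike 𝕜] : CompactSpace (unitaryGroup ι 𝕜) :=
  isCompact_iff_compactSpace.mp <|
    (isCompact_univ_pi fun _ => isCompact_univ_pi fun _ => isCompact_closedBall (0 : 𝕜) 1)
      |>.of_isClosed_subset (isClosed_unitary (R := Matrix ι ι 𝕜)) fun _ hU =>
        Set.mem_univ_pi.mpr fun i => Set.mem_univ_pi.mpr fun j =>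
          mem_closedBall_zero_iff.mpr (entry_norm_bound_of_unitary hU i j)

theorem MeasureTheory.Measure.isMulRightInvariant_of_isProbabilityMeasure {G : Type*} [Group G]
    [TopologicalSpace G] [IsTopologicalGroup G] [LocallyCompactSpace G] [MeasurableSpace G]
    [BorelSpace G] (μ : Measure G) [μ.IsHaarMeasure] [IsProbabilityMeasure μ] :
    μ.IsMulRightInvariant where
  map_mul_right_eq_self g :=
    have := isProbabilityMeasure_map (μ := μ) (measurable_mul_const g).aemeasurable
    isHaarMeasure_eq_of_isProbabilityMeasure _ μ

def coordinateReflection {ι : Type*} [Fintype ι] [DecidableEq ι] (k : ι) :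
    orthogonalGroup ι ℝ :=
  ⟨diagonal fun l => if l = k then -1 else 1, by
    rw [mem_orthogonalGroup_iff, diagonal_transpose, diagonal_mul_diagonal, ← diagonal_one]
    congr 1
    funext l
    split_ifs <;> norm_num⟩

theorem entry_coordinateReflection_mul {n : ℕ} (k : Fin n) (u : orthogonalGroup (Fin n) ℝ)
    (i j : ℕ) :
    entry (coordinateReflection k * u) i j = (if i = k then -1 else 1) * entry u i j := by
  unfold entry
  split_ifs <;> simp [coordinateReflection, diagonal_mul, Fin.ext_iff, *]

theorem entry_mul_coordinateReflection {n : ℕ} (k : Fin n) (u : orthogonalGroup (Fin n) ℝ)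
    (i j : ℕ) :
    entry (u * coordinateReflection k) i j = entry u i j * (if j = k then -1 else 1) := by
  unfold entry
  split_ifs <;> simp [coordinateReflection, mul_diagonal, Fin.ext_iff, *]

theorem prod_prod_sign_mul_pow {ι κ R : Type*} [Fintype ι] [DecidableEq ι] [Fintype κ]
    [CommRing R] (a : ι → κ → ℕ) (x : ι → κ → R) (i₀ : ι) :
    ∏ i, ∏ j, ((if i = i₀ then -1 else 1) * x i j) ^ a i j =
      (-1) ^ (∑ j, a i₀ j) * ∏ i, ∏ j, x i j ^ a i j := by
  simp_rw [mul_pow, Finset.prod_mul_distrib, Finset.prod_pow_eq_pow_sum, ite_pow, one_pow,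
    Finset.prod_ite_eq', Finset.mem_univ, if_true]

theorem prod_prod_mul_sign_pow {ι κ R : Type*} [Fintype ι] [Fintype κ] [DecidableEq κ]
    [CommRing R] (a : ι → κ → ℕ) (x : ι → κ → R) (j₀ : κ) :
    ∏ i, ∏ j, (x i j * (if j = j₀ then -1 else 1)) ^ a i j =
      (-1) ^ (∑ i, a i j₀) * ∏ i, ∏ j, x i j ^ a i j := by
  rw [Finset.prod_comm, Finset.prod_comm (γ := ι)]
  simp_rw [mul_comm (x _ _)]
  exact prod_prod_sign_mul_pow (fun j i => a i j) (fun j i => x i j) j₀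

theorem In_eq_zero_of_odd_row_sum {n p q : ℕ} (hp : p ≤ n) (a : Matrix (Fin p) (Fin q) ℕ)
    (μ : Measure (orthogonalGroup (Fin n) ℝ)) [μ.IsMulLeftInvariant] (i₀ : Fin p)
    (h : Odd (∑ j, a i₀ j)) : In n μ a = 0 :=
  integral_eq_zero_of_mul_left_eq_neg (g := coordinateReflection (Fin.castLE hp i₀)) fun u => by
    simp_rw [entry_coordinateReflection_mul, Fin.val_castLE, Fin.val_inj]
    rw [prod_prod_sign_mul_pow a (fun i j => entry u i j), h.neg_one_pow, neg_one_mul]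

theorem In_eq_zero_of_odd_col_sum {n p q : ℕ} (hq : q ≤ n) (a : Matrix (Fin p) (Fin q) ℕ)
    (μ : Measure (orthogonalGroup (Fin n) ℝ)) [μ.IsMulRightInvariant] (j₀ : Fin q)
    (h : Odd (∑ i, a i j₀)) : In n μ a = 0 :=
  integral_eq_zero_of_mul_right_eq_neg (g := coordinateReflection (Fin.castLE hq j₀)) fun u => by
    simp_rw [entry_mul_coordinateReflection, Fin.val_castLE, Fin.val_inj]
    rw [prod_prod_mul_sign_pow a (fun i j => entry u i j), h.neg_one_pow, neg_one_mul]

theorem statement2_general (n p q : ℕ) (hp : p ≤ n) (hq : q ≤ n)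
    (a : Matrix (Fin p) (Fin q) ℕ)
    (μ : Measure (Matrix.orthogonalGroup (Fin n) ℝ))
    [μ.IsHaarMeasure] [IsProbabilityMeasure μ]
    (h : In n μ a ≠ 0) :
    (∀ i, Even (∑ j, a i j)) ∧ (∀ j, Even (∑ i, a i j)) := by
  have := μ.isMulRightInvariant_of_isProbabilityMeasure
  exact ⟨fun i => Nat.not_odd_iff_even.mp fun hi => h (In_eq_zero_of_odd_row_sum hp a μ i hi),
    fun j => Nat.not_odd_iff_even.mp fun hj => h (In_eq_zero_of_odd_col_sum hq a μ j hj)⟩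

/-- if `I_n(a) ≠ 0` then `a` is admissible. -/
theorem statement2 (n p q : ℕ) (hn : 1 ≤ n) (hp : p ≤ n) (hq : q ≤ n)
    (a : Matrix (Fin p) (Fin q) ℕ)
    (μ : Measure (Matrix.orthogonalGroup (Fin n) ℝ))
    [μ.IsHaarMeasure] [IsProbabilityMeasure μ]
    (h : In n μ a ≠ 0) :
    (∀ i, Even (∑ j, a i j)) ∧ (∀ j, Even (∑ i, a i j)) :=
  statement2_general n p q hp hq a μ h
end
end
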